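/- The asymptotic density b_1(k) of the set {n ∈ ℕ : r(2n+2) − r(2n+1) = k} equals 0 for k > 1, equals 1/4 for k = 1, and equals 3·2^{k−3} for k < 1 (k an integer). -/

import Mathlib

/-- `r n` counts indices `j ≥ 0` with the `j`-th and `(j+1)`-st binary digits of `n` both `1`. -/
def r (n : ℕ) : ℕ :=
  ((Finset.range (n + 1)).filter (fun j => n.testBit j ∧ n.testBit (j + 1))).card

/-- `A` has asymptotic density `c`. -/
def HasDensity (P : ℕ → Prop) [DecidablePred P] (c : ℝ) : Prop :=
  Filter.Tendsto (fun x : ℕ => (((Finset.range x).filter P).card : ℝ) / x)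
    Filter.atTop (nhds c)

/-!
Since `r (2 * m) = r m` and `r (2 * m + 1) = r m + m % 2`, the quantity
`rDiff n = r (2 * n + 2) - r (2 * n + 1)` satisfies `rDiff (2 * u) = u % 2` and
`rDiff (2 * u + 1) = rDiff u - 1`. So if `n` ends in the binary block `a 0 1^t`, then
`rDiff n = a - t`: the value `1` occurs exactly on `n ≡ 2 [MOD 4]`, larger values never occur, and
`-t` occurs on two residue classes, of densities `2^(-t-2)` and `2^(-t-3)`.
-/

open Finset Filter

lemma r_eq_sum_range {n N : ℕ} (h : n < N) :
    r n = ∑ j ∈ range N, if n.testBit j ∧ n.testBit (j + 1) then 1 else 0 := by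
  rw [r, card_filter]
  refine sum_subset (range_subset_range.2 h) fun j _ hj => ?_
  have : n < 2 ^ j := n.lt_two_pow_self.trans_le
    (Nat.pow_le_pow_right two_pos (by simp at hj; omega))
  simp [Nat.testBit_lt_two_pow this]

lemma r_bit (b : Bool) (m : ℕ) :
    r (Nat.bit b m) = r m + if b ∧ m.testBit 0 then 1 else 0 := by
  have hbit : Nat.bit b m < 2 * m + 2 := by cases b <;> simp [Nat.bit]
  rw [r_eq_sum_range hbit, sum_range_succ', r_eq_sum_range (by omega : m < 2 * m + 1)]
  simp only [Nat.testBit_bit_zero, Nat.testBit_bit_succ]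

lemma r_two_mul (m : ℕ) : r (2 * m) = r m := by
  simpa using r_bit false m

lemma r_two_mul_add_one (m : ℕ) : r (2 * m + 1) = r m + m % 2 := by
  have h := r_bit true m
  simp only [Nat.bit_true_apply, Nat.testBit_zero, true_and, decide_eq_true_eq] at h
  split_ifs at h <;> omega

def rDiff (n : ℕ) : ℤ := r (2 * n + 2) - r (2 * n + 1)

lemma rDiff_two_mul (u : ℕ) : rDiff (2 * u) = (u % 2 : ℕ) := by
  rw [rDiff, show 2 * (2 * u) + 2 = 2 * (2 * u + 1) by ring]
  simp only [r_two_mul, r_two_mul_add_one, Nat.mul_mod_right]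
  push_cast; ring

lemma rDiff_two_mul_add_one (u : ℕ) : rDiff (2 * u + 1) = rDiff u - 1 := by
  rw [rDiff, rDiff, show 2 * (2 * u + 1) + 2 = 2 * (2 * (u + 1)) by ring,
    show 2 * u + 2 = 2 * (u + 1) by ring]
  simp only [r_two_mul, r_two_mul_add_one, Nat.mul_add_mod]
  push_cast; ring

lemma rDiff_le_one (n : ℕ) : rDiff n ≤ 1 := by
  induction n using Nat.strong_induction_on with
  | _ n ih =>
    obtain ⟨u, rfl | rfl⟩ := Nat.even_or_odd' n
    · rw [rDiff_two_mul]; omega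
    · rw [rDiff_two_mul_add_one]; linarith [ih u (by omega)]

lemma rDiff_eq_one_iff (n : ℕ) : rDiff n = 1 ↔ n % 4 = 2 := by
  obtain ⟨u, rfl | rfl⟩ := Nat.even_or_odd' n
  · rw [rDiff_two_mul]; omega
  · rw [rDiff_two_mul_add_one]; have := rDiff_le_one u; omega

lemma two_mul_add_one_mod_two_pow_succ (u t : ℕ) :
    (2 * u + 1) % 2 ^ (t + 1) = 2 * (u % 2 ^ t) + 1 := by
  rw [pow_succ', Nat.mod_mul, show (2 * u + 1) / 2 = u by omega]
  omega

lemma two_mul_mod_two_pow_succ (u t : ℕ) : 2 * u % 2 ^ (t + 1) = 2 * (u % 2 ^ t) := by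
  rw [pow_succ', Nat.mul_mod_mul_left]

/-- The two classes are the `n` whose binary expansion ends in `0 0 1^t`, resp. `1 0 1^(t+1)`. -/
lemma rDiff_eq_neg_iff (t n : ℕ) :
    rDiff n = -t ↔ n % 2 ^ (t + 2) = 2 ^ t - 1 ∨ n % 2 ^ (t + 3) = 3 * 2 ^ (t + 1) - 1 := by
  induction t generalizing n with
  | zero =>
    obtain ⟨u, rfl | rfl⟩ := Nat.even_or_odd' n
    · rw [rDiff_two_mul]; norm_num; omega
    · rw [rDiff_two_mul_add_one, Nat.cast_zero, neg_zero, sub_eq_zero, rDiff_eq_one_iff]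
      norm_num; omega
  | succ t ih =>
    have h₁ : 2 ^ (t + 1) = 2 * 2 ^ t := pow_succ' 2 t
    have h₂ : 2 ^ (t + 2) = 2 * 2 ^ (t + 1) := pow_succ' 2 (t + 1)
    have h₀ : 1 ≤ 2 ^ t := Nat.one_le_two_pow
    obtain ⟨u, rfl | rfl⟩ := Nat.even_or_odd' n
    · rw [rDiff_two_mul, two_mul_mod_two_pow_succ, two_mul_mod_two_pow_succ]
      omega
    · rw [rDiff_two_mul_add_one, two_mul_add_one_mod_two_pow_succ,
        two_mul_add_one_mod_two_pow_succ, show rDiff u - 1 = -↑(t + 1) ↔ rDiff u = -t by omega,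
        ih u]
      omega

lemma hasDensity_congr {P Q : ℕ → Prop} [DecidablePred P] [DecidablePred Q] {c : ℝ}
    (h : ∀ n, P n ↔ Q n) : HasDensity P c ↔ HasDensity Q c := by
  simp only [HasDensity, filter_congr fun n _ => h n]

lemma hasDensity_false : HasDensity (fun _ => False) 0 := by
  simp [HasDensity]

lemma HasDensity.or {P Q : ℕ → Prop} [DecidablePred P] [DecidablePred Q] {a b : ℝ}
    (hP : HasDensity P a) (hQ : HasDensity Q b) (hPQ : ∀ n, ¬(P n ∧ Q n)) :
    HasDensity (fun n => P n ∨ Q n) (a + b) := by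
  have hcard (x : ℕ) :
      #{n ∈ range x | P n ∨ Q n} = #{n ∈ range x | P n} + #{n ∈ range x | Q n} := by
    rw [filter_or, card_union_of_disjoint (disjoint_filter.2 fun n _ hp hq => hPQ n ⟨hp, hq⟩)]
  simpa only [HasDensity, hcard, Nat.cast_add, add_div] using hP.add hQ

lemma hasDensity_of_abs_card_sub_le {P : ℕ → Prop} [DecidablePred P] {c C : ℝ}
    (h : ∀ x : ℕ, |(#{n ∈ range x | P n} : ℝ) - c * x| ≤ C) : HasDensity P c := by
  rw [HasDensity, tendsto_iff_norm_sub_tendsto_zero]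
  refine squeeze_zero' (Eventually.of_forall fun _ => norm_nonneg _) ?_
    (tendsto_const_div_atTop_nhds_zero_nat C)
  filter_upwards [eventually_gt_atTop 0] with x hx
  have hx' : (0 : ℝ) < x := by exact_mod_cast hx
  rw [Real.norm_eq_abs,
    show (#{n ∈ range x | P n} : ℝ) / x - c = (#{n ∈ range x | P n} - c * x) / x by field_simp,
    abs_div, abs_of_pos hx']
  exact div_le_div_of_nonneg_right (h x) hx'.le

lemma hasDensity_mod_eq {m a : ℕ} (hm : 0 < m) (ha : a < m) :
    HasDensity (fun n => n % m = a) (1 / m) := by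
  refine hasDensity_of_abs_card_sub_le (C := 1) fun x => ?_
  have hcount : #{n ∈ range x | n % m = a} = x / m + if a % m < x % m then 1 else 0 := by
    rw [← Nat.count_modEq_card x hm a, Nat.count_eq_card_filter_range]
    simp [Nat.ModEq, Nat.mod_eq_of_lt ha]
  have hfloor := Nat.floor_div_eq_div (K := ℝ) x m
  have hlo := Nat.floor_le (show (0 : ℝ) ≤ x / m by positivity)
  have hhi := Nat.lt_floor_add_one ((x : ℝ) / m)
  rw [hfloor] at hlo hhi
  rw [hcount, one_div_mul_eq_div, abs_sub_le_iff]
  split_ifs <;> push_cast <;> constructor <;> linarith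

lemma hasDensity_rDiff_eq_neg (t : ℕ) :
    HasDensity (fun n => rDiff n = -t) (1 / (2 ^ (t + 2) : ℕ) + 1 / (2 ^ (t + 3) : ℕ)) := by
  have h₀ : 1 ≤ 2 ^ t := Nat.one_le_two_pow
  have h₁ : 2 ^ (t + 1) = 2 * 2 ^ t := pow_succ' 2 t
  have h₂ : 2 ^ (t + 2) = 2 * 2 ^ (t + 1) := pow_succ' 2 (t + 1)
  have h₃ : 2 ^ (t + 3) = 2 * 2 ^ (t + 2) := pow_succ' 2 (t + 2)
  rw [hasDensity_congr (rDiff_eq_neg_iff t)]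
  refine (hasDensity_mod_eq (by positivity) (by omega)).or
    (hasDensity_mod_eq (by positivity) (by omega)) fun n ⟨hlow, hhigh⟩ => ?_
  have := Nat.mod_mod_of_dvd n (pow_dvd_pow 2 (by omega : t + 2 ≤ t + 3))
  rw [hhigh, hlow, Nat.mod_eq_sub_mod (by omega), Nat.mod_eq_of_lt (by omega)] at this
  omega

theorem b_one_values (k : ℤ) :
    HasDensity (fun n : ℕ => (r (2 * n + 2) : ℤ) - (r (2 * n + 1) : ℤ) = k)
      (if 1 < k then 0 else if k = 1 then 1 / 4 else 3 * (2 : ℝ) ^ (k - 3)) := by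
  change HasDensity (fun n => rDiff n = k) _
  rcases lt_trichotomy 1 k with hk | rfl | hk
  · rw [if_pos hk, hasDensity_congr fun n => iff_false_intro ((rDiff_le_one n).trans_lt hk).ne]
    exact hasDensity_false
  · rw [hasDensity_congr rDiff_eq_one_iff]
    simpa using hasDensity_mod_eq (m := 4) (a := 2) (by norm_num) (by norm_num)
  · obtain ⟨t, rfl⟩ : ∃ t : ℕ, k = -t := ⟨(-k).toNat, by omega⟩
    rw [if_neg (by omega), if_neg (by omega)]
    convert hasDensity_rDiff_eq_neg t using 1
    rw [zpow_sub₀ two_ne_zero, zpow_neg, zpow_natCast]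
    push_cast
    field_simp
    ring
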